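/- Let γ be a modular bridge from Ω_A to Ω_B. For any ω ∈ dom(D_M) and any l ≥ D_M(ω), the l-modular target set t_γ(ω|l) is a nonempty subset of N which is compact for the norm ‖·‖_N. -/

import Mathlib

open scoped ComplexOrder

noncomputable section

/-! ### Admissible functions -/

/-- A function `F : [0,∞)⁴ → [0,∞)` is admissible when it is nondecreasing in each argument
and dominates `x₁x₃ + x₂x₄`. -/
def Admissible (F : ℝ → ℝ → ℝ → ℝ → ℝ) : Prop :=
  (∀ x₁ x₂ x₃ x₄ y₁ y₂ y₃ y₄ : ℝ, 0 ≤ x₁ → 0 ≤ x₂ → 0 ≤ x₃ → 0 ≤ x₄ →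
      x₁ ≤ y₁ → x₂ ≤ y₂ → x₃ ≤ y₃ → x₄ ≤ y₄ → F x₁ x₂ x₃ x₄ ≤ F y₁ y₂ y₃ y₄) ∧
  (∀ x₁ x₂ x₃ x₄ : ℝ, 0 ≤ x₁ → 0 ≤ x₂ → 0 ≤ x₃ → 0 ≤ x₄ →
      x₁ * x₃ + x₂ * x₄ ≤ F x₁ x₂ x₃ x₄)

/-- An admissible triple `(F,G,H)`. -/
def AdmissibleTriple (F : ℝ → ℝ → ℝ → ℝ → ℝ) (G : ℝ → ℝ → ℝ → ℝ) (H : ℝ → ℝ → ℝ) : Prop :=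
  Admissible F ∧
  (∀ x y z x' y' z' : ℝ, 0 ≤ x → 0 ≤ y → 0 ≤ z → x ≤ x' → y ≤ y' → z ≤ z' →
      G x y z ≤ G x' y' z') ∧
  (∀ x y z : ℝ, 0 ≤ x → 0 ≤ y → 0 ≤ z → (x + y) * z ≤ G x y z) ∧
  (∀ x y x' y' : ℝ, 0 ≤ x → 0 ≤ y → x ≤ x' → y ≤ y' → H x y ≤ H x' y') ∧
  (∀ x y : ℝ, 0 ≤ x → 0 ≤ y → 2 * x * y ≤ H x y)

section ReIm

variable {A : Type*} [NormedRing A] [StarRing A] [NormedAlgebra ℂ A]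

/-- The real part `(a + a*)/2` of an element of a complex `*`-algebra. -/
def reEl (a : A) : A := (2⁻¹ : ℂ) • (a + star a)

/-- The imaginary part `(a - a*)/(2i)` of an element of a complex `*`-algebra. -/
def imEl (a : A) : A := ((2 * Complex.I)⁻¹ : ℂ) • (a - star a)

end ReIm

/-! ### States -/

/-- A state on a unital complex `*`-algebra: a linear functional which is unital
and positive. -/
structure CState (A : Type*) [NormedRing A] [StarRing A] [NormedAlgebra ℂ A] where
  toFun : A →ₗ[ℂ] ℂ
  map_one : toFun 1 = 1
  positive : ∀ a : A, 0 ≤ toFun (star a * a)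

/-- The topology induced by a distance function, generated by its open balls. -/
def ballTopology {X : Type*} (d : X → X → ℝ) : TopologicalSpace X :=
  TopologicalSpace.generateFrom {s | ∃ (x : X) (ε : ℝ), 0 < ε ∧ s = {y | d x y < ε}}

/-- The Hausdorff distance between two sets, relative to a distance function. -/
def hausDist {X : Type*} (d : X → X → ℝ) (S T : Set X) : ℝ :=
  max (sSup {r | ∃ x ∈ S, r = sInf {s | ∃ y ∈ T, s = d x y}})
      (sSup {r | ∃ y ∈ T, r = sInf {s | ∃ x ∈ S, s = d x y}})

/-- The diameter of a set relative to a distance function. -/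
def setDiam {X : Type*} (d : X → X → ℝ) (S : Set X) : ℝ :=
  sSup {r | ∃ x ∈ S, ∃ y ∈ S, r = d x y}

/-- The weak-* topology on the state space. -/
def stateWeakTopology (A : Type*) [NormedRing A] [StarRing A] [NormedAlgebra ℂ A] :
    TopologicalSpace (CState A) :=
  TopologicalSpace.induced (fun (φ : CState A) (a : A) => φ.toFun a) Pi.topologicalSpace

/-- The Monge-Kantorovich metric associated with a Lipschitz seminorm `L` with domain `dom`. -/
def mkDist {A : Type*} [NormedRing A] [StarRing A] [NormedAlgebra ℂ A]
    (dom : Set A) (L : A → ℝ) (φ ψ : CState A) : ℝ :=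
  sSup {r | ∃ a ∈ dom, L a ≤ 1 ∧ r = ‖φ.toFun a - ψ.toFun a‖}

/-- The 1-level set of a pivot is nonempty. -/
def pivotLevelNonempty {D : Type*} [NormedRing D] [StarRing D] [NormedAlgebra ℂ D]
    (x : D) : Prop :=
  ∃ φ : CState D,
    φ.toFun (star (1 - x) * (1 - x)) = 0 ∧ φ.toFun ((1 - x) * star (1 - x)) = 0

/-! ### Quasi-Leibniz quantum compact metric spaces -/

/-- An `F`-quasi-Leibniz quantum compact metric space structure on a unital C*-algebra `A`:
a Lipschitz seminorm `L` defined on a dense Jordan-Lie subalgebra `dom` of the self-adjoint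
part of `A`, vanishing exactly on `ℝ1`, lower semicontinuous, whose Monge-Kantorovich metric
metrizes the weak-* topology on the state space, and satisfying the `F`-quasi-Leibniz
inequality. -/
structure QLSpace (A : Type*) [NormedRing A] [StarRing A] [CStarRing A]
    [NormedAlgebra ℂ A] [StarModule ℂ A] [CompleteSpace A]
    (F : ℝ → ℝ → ℝ → ℝ → ℝ) where
  dom : Set A
  L : A → ℝ
  dom_selfAdjoint : ∀ a ∈ dom, IsSelfAdjoint a
  dom_dense : closure dom = {a : A | IsSelfAdjoint a}
  dom_add : ∀ a ∈ dom, ∀ b ∈ dom, a + b ∈ dom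
  dom_smul : ∀ (t : ℝ), ∀ a ∈ dom, (t : ℂ) • a ∈ dom
  dom_jordan : ∀ a ∈ dom, ∀ b ∈ dom, (2⁻¹ : ℂ) • (a * b + b * a) ∈ dom
  dom_lie : ∀ a ∈ dom, ∀ b ∈ dom, ((2 * Complex.I)⁻¹ : ℂ) • (a * b - b * a) ∈ dom
  one_mem : (1 : A) ∈ dom
  L_nonneg : ∀ a : A, 0 ≤ L a
  L_add : ∀ a ∈ dom, ∀ b ∈ dom, L (a + b) ≤ L a + L b
  L_smul : ∀ (t : ℝ), ∀ a ∈ dom, L ((t : ℂ) • a) = |t| * L a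
  L_eq_zero_iff : ∀ a ∈ dom, (L a = 0 ↔ ∃ t : ℝ, a = (t : ℂ) • (1 : A))
  lowerSemicontinuous : IsClosed {a : A | a ∈ dom ∧ L a ≤ 1}
  leibniz_jordan : ∀ a ∈ dom, ∀ b ∈ dom,
      L ((2⁻¹ : ℂ) • (a * b + b * a)) ≤ F ‖a‖ ‖b‖ (L a) (L b)
  leibniz_lie : ∀ a ∈ dom, ∀ b ∈ dom,
      L (((2 * Complex.I)⁻¹ : ℂ) • (a * b - b * a)) ≤ F ‖a‖ ‖b‖ (L a) (L b)
  mk_metrizes : ballTopology (mkDist dom L) = stateWeakTopology A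
/-! ### Metrized quantum vector bundles -/

/-- An `(F,G,H)`-metrized quantum vector bundle: a left Hilbert module `M` over a unital
C*-algebra `A` equipped with an `F`-quasi-Leibniz quantum compact metric space structure,
together with a D-norm `D` defined on a dense subspace `Ddom` of `M`, dominating the
C*-Hilbert norm, with compact unit ball, and satisfying the inner and modular quasi-Leibniz
inequalities with respect to `G` and `H`. -/
structure BundledMQVB (F : ℝ → ℝ → ℝ → ℝ → ℝ) (G : ℝ → ℝ → ℝ → ℝ) (H : ℝ → ℝ → ℝ) where
  A : Type
  [instRing : NormedRing A]
  [instStarRing : StarRing A]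
  [instCStar : CStarRing A]
  [instAlg : NormedAlgebra ℂ A]
  [instStarMod : StarModule ℂ A]
  [instComplete : CompleteSpace A]
  M : Type
  [instM : NormedAddCommGroup M]
  [instMC : Module ℂ M]
  [instMA : Module A M]
  [instTower : IsScalarTower ℂ A M]
  [instMComplete : CompleteSpace M]
  base : QLSpace A F
  inn : M → M → A
  Ddom : Set M
  D : M → ℝ
  inn_add_left : ∀ x y z : M, inn (x + y) z = inn x z + inn y z
  inn_smul_left : ∀ (a : A) (x y : M), inn (a • x) y = a * inn x y
  inn_smul_leftC : ∀ (c : ℂ) (x y : M), inn (c • x) y = c • inn x y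
  inn_star : ∀ x y : M, star (inn x y) = inn y x
  inn_pos : ∀ x : M, ∃ b : A, inn x x = star b * b
  inn_definite : ∀ x : M, inn x x = 0 → x = 0
  norm_eq : ∀ x : M, ‖x‖ = Real.sqrt ‖inn x x‖
  Ddom_dense : Dense Ddom
  Ddom_add : ∀ x ∈ Ddom, ∀ y ∈ Ddom, x + y ∈ Ddom
  Ddom_smul : ∀ (c : ℂ), ∀ x ∈ Ddom, c • x ∈ Ddom
  D_nonneg : ∀ x : M, 0 ≤ D x
  D_add : ∀ x ∈ Ddom, ∀ y ∈ Ddom, D (x + y) ≤ D x + D y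
  D_smul : ∀ (c : ℂ), ∀ x ∈ Ddom, D (c • x) = ‖c‖ * D x
  norm_le_D : ∀ x ∈ Ddom, ‖x‖ ≤ D x
  D_ball_compact : IsCompact {x : M | x ∈ Ddom ∧ D x ≤ 1}
  D_leibniz : ∀ a ∈ base.dom, ∀ x ∈ Ddom,
      a • x ∈ Ddom ∧ D (a • x) ≤ G ‖a‖ (base.L a) (D x)
  inn_leibniz : ∀ x ∈ Ddom, ∀ y ∈ Ddom,
      reEl (inn x y) ∈ base.dom ∧ imEl (inn x y) ∈ base.dom ∧
      base.L (reEl (inn x y)) ≤ H (D x) (D y) ∧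
      base.L (imEl (inn x y)) ≤ H (D x) (D y)

attribute [instance] BundledMQVB.instRing BundledMQVB.instStarRing BundledMQVB.instCStar
  BundledMQVB.instAlg BundledMQVB.instStarMod BundledMQVB.instComplete
  BundledMQVB.instM BundledMQVB.instMC BundledMQVB.instMA BundledMQVB.instTower
  BundledMQVB.instMComplete

variable {F : ℝ → ℝ → ℝ → ℝ → ℝ} {G : ℝ → ℝ → ℝ → ℝ} {H : ℝ → ℝ → ℝ}

/-- The closed ball of radius `r` for the D-norm of a metrized quantum vector bundle. -/
def BundledMQVB.Dball (Ω : BundledMQVB F G H) (r : ℝ) : Set Ω.M :=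
  {ω | ω ∈ Ω.Ddom ∧ Ω.D ω ≤ r}

/-- The modular Monge-Kantorovich metric of a metrized quantum vector bundle. -/
def BundledMQVB.mkD (Ω : BundledMQVB F G H) (x y : Ω.M) : ℝ :=
  sSup {r | ∃ ξ ∈ Ω.Ddom, Ω.D ξ ≤ 1 ∧ r = ‖Ω.inn x ξ - Ω.inn y ξ‖}

/-- The `A`-weak topology on the module of a metrized quantum vector bundle. -/
def BundledMQVB.aWeak (Ω : BundledMQVB F G H) : TopologicalSpace Ω.M :=
  TopologicalSpace.induced (fun (ω : Ω.M) (ξ : Ω.M) => Ω.inn ω ξ) Pi.topologicalSpace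
/-! ### Modular bridges -/

/-- A modular bridge between two metrized quantum vector bundles. -/
structure ModularBridge (ΩA ΩB : BundledMQVB F G H) where
  Dalg : Type
  [instDRing : NormedRing Dalg]
  [instDStarRing : StarRing Dalg]
  [instDCStar : CStarRing Dalg]
  [instDAlg : NormedAlgebra ℂ Dalg]
  [instDStarMod : StarModule ℂ Dalg]
  [instDComplete : CompleteSpace Dalg]
  J : Type
  [instJ : Nonempty J]
  pivot : Dalg
  piA : ΩA.A →⋆ₐ[ℂ] Dalg
  piB : ΩB.A →⋆ₐ[ℂ] Dalg
  piA_inj : Function.Injective piA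
  piB_inj : Function.Injective piB
  pivot_norm : ‖pivot‖ = 1
  levelSet_nonempty : pivotLevelNonempty pivot
  anchors : J → ΩA.M
  coanchors : J → ΩB.M
  anchors_mem : ∀ j, anchors j ∈ ΩA.Ddom
  anchors_le : ∀ j, ΩA.D (anchors j) ≤ 1
  coanchors_mem : ∀ j, coanchors j ∈ ΩB.Ddom
  coanchors_le : ∀ j, ΩB.D (coanchors j) ≤ 1

attribute [instance] ModularBridge.instDRing ModularBridge.instDStarRing
  ModularBridge.instDCStar ModularBridge.instDAlg ModularBridge.instDStarMod
  ModularBridge.instDComplete ModularBridge.instJ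

namespace ModularBridge

variable {ΩA ΩB : BundledMQVB F G H}

/-- The bridge seminorm of a modular bridge. -/
def bn (γ : ModularBridge ΩA ΩB) (a : ΩA.A) (b : ΩB.A) : ℝ :=
  ‖γ.piA a * γ.pivot - γ.pivot * γ.piB b‖

/-- The deck seminorm of a modular bridge. -/
def dn (γ : ModularBridge ΩA ΩB) (ω : ΩA.M) (η : ΩB.M) : ℝ :=
  ⨆ k : γ.J,
    max (γ.bn (ΩA.inn ω (γ.anchors k)) (ΩB.inn η (γ.coanchors k)))
        (γ.bn (ΩA.inn (γ.anchors k) ω) (ΩB.inn (γ.coanchors k) η))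

/-- The basic reach of a modular bridge. -/
def basicReach (γ : ModularBridge ΩA ΩB) : ℝ :=
  max
    (sSup {r | ∃ a ∈ ΩA.base.dom, ΩA.base.L a ≤ 1 ∧
        r = sInf {s | ∃ b ∈ ΩB.base.dom, ΩB.base.L b ≤ 1 ∧ s = γ.bn a b}})
    (sSup {r | ∃ b ∈ ΩB.base.dom, ΩB.base.L b ≤ 1 ∧
        r = sInf {s | ∃ a ∈ ΩA.base.dom, ΩA.base.L a ≤ 1 ∧ s = γ.bn a b}})

/-- The modular reach of a modular bridge. -/
def modularReach (γ : ModularBridge ΩA ΩB) : ℝ :=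
  ⨆ j : γ.J, γ.dn (γ.anchors j) (γ.coanchors j)

/-- The imprint of a modular bridge. -/
def imprint (γ : ModularBridge ΩA ΩB) : ℝ :=
  max (hausDist ΩA.mkD (Set.range γ.anchors) (ΩA.Dball 1))
      (hausDist ΩB.mkD (Set.range γ.coanchors) (ΩB.Dball 1))

/-- The reach of a modular bridge. -/
def reach (γ : ModularBridge ΩA ΩB) : ℝ :=
  max γ.basicReach (γ.modularReach + γ.imprint)

/-- The states of the bridge algebra in the 1-level set of the pivot. -/
def levelStates (γ : ModularBridge ΩA ΩB) : Set (CState γ.Dalg) :=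
  {φ | φ.toFun (star (1 - γ.pivot) * (1 - γ.pivot)) = 0 ∧
       φ.toFun ((1 - γ.pivot) * star (1 - γ.pivot)) = 0}

/-- The height of a modular bridge. -/
def height (γ : ModularBridge ΩA ΩB) : ℝ :=
  max
    (hausDist (mkDist ΩA.base.dom ΩA.base.L) (Set.univ : Set (CState ΩA.A))
      {ψ | ∃ φ ∈ γ.levelStates, ∀ a : ΩA.A, ψ.toFun a = φ.toFun (γ.piA a)})
    (hausDist (mkDist ΩB.base.dom ΩB.base.L) (Set.univ : Set (CState ΩB.A))
      {ψ | ∃ φ ∈ γ.levelStates, ∀ b : ΩB.A, ψ.toFun b = φ.toFun (γ.piB b)})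

/-- The length of a modular bridge. -/
def length (γ : ModularBridge ΩA ΩB) : ℝ := max γ.reach γ.height

/-- The `l`-modular target set of `ω` for a modular bridge. -/
def mtarget (γ : ModularBridge ΩA ΩB) (ω : ΩA.M) (l : ℝ) : Set ΩB.M :=
  {η | η ∈ ΩB.Ddom ∧ ΩB.D η ≤ l ∧ γ.dn ω η ≤ l * γ.reach}

/-- The `l`-target set of `a` for a modular bridge. -/
def atarget (γ : ModularBridge ΩA ΩB) (a : ΩA.A) (l : ℝ) : Set ΩB.A :=
  {b | b ∈ ΩB.base.dom ∧ ΩB.base.L b ≤ l ∧ γ.bn a b ≤ l * γ.basicReach}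

/-- The reverse of a modular bridge. -/
def reverse (γ : ModularBridge ΩA ΩB) : ModularBridge ΩB ΩA where
  Dalg := γ.Dalg
  J := γ.J
  pivot := star γ.pivot
  piA := γ.piB
  piB := γ.piA
  piA_inj := γ.piB_inj
  piB_inj := γ.piA_inj
  pivot_norm := by rw [norm_star]; exact γ.pivot_norm
  levelSet_nonempty := by
    obtain ⟨φ, h1, h2⟩ := γ.levelSet_nonempty
    refine ⟨φ, ?_, ?_⟩
    · have e1 : star ((1 : γ.Dalg) - star γ.pivot) = 1 - γ.pivot := by
        simp [star_sub]
      have e2 : (1 : γ.Dalg) - star γ.pivot = star (1 - γ.pivot) := by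
        simp [star_sub]
      rw [e1, e2]; exact h2
    · have e1 : star ((1 : γ.Dalg) - star γ.pivot) = 1 - γ.pivot := by
        simp [star_sub]
      have e2 : (1 : γ.Dalg) - star γ.pivot = star (1 - γ.pivot) := by
        simp [star_sub]
      rw [e1, e2]; exact h1
  anchors := γ.coanchors
  coanchors := γ.anchors
  anchors_mem := γ.coanchors_mem
  anchors_le := γ.coanchors_le
  coanchors_mem := γ.anchors_mem
  coanchors_le := γ.anchors_le

end ModularBridge

/-! ### Modular treks -/

/-- A modular trek: a finite chain of composable modular bridges. -/
inductive Trek (F : ℝ → ℝ → ℝ → ℝ → ℝ) (G : ℝ → ℝ → ℝ → ℝ) (H : ℝ → ℝ → ℝ) :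
    BundledMQVB F G H → BundledMQVB F G H → Type 1
  | single {ΩA ΩB : BundledMQVB F G H} (γ : ModularBridge ΩA ΩB) : Trek F G H ΩA ΩB
  | cons {ΩA ΩB ΩC : BundledMQVB F G H} (γ : ModularBridge ΩA ΩB)
      (Γ : Trek F G H ΩB ΩC) : Trek F G H ΩA ΩC

namespace Trek

/-- The length of a modular trek: the sum of the lengths of its bridges. -/
def length : ∀ {ΩA ΩB : BundledMQVB F G H}, Trek F G H ΩA ΩB → ℝ
  | _, _, .single γ => γ.length
  | _, _, .cons γ Γ => γ.length + Trek.length Γ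

/-- The modular target set of a modular trek (the set of endpoints of `l`-itineraries). -/
def mtarget : ∀ {ΩA ΩB : BundledMQVB F G H}, Trek F G H ΩA ΩB → ΩA.M → ℝ → Set ΩB.M
  | _, _, .single γ, ω, l => γ.mtarget ω l
  | _, _, .cons γ Γ, ω, l => {η | ∃ ξ ∈ γ.mtarget ω l, η ∈ Trek.mtarget Γ ξ l}

/-- The target set of a modular trek on the base algebras. -/
def atarget : ∀ {ΩA ΩB : BundledMQVB F G H}, Trek F G H ΩA ΩB → ΩA.A → ℝ → Set ΩB.A
  | _, _, .single γ, a, l => γ.atarget a l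
  | _, _, .cons γ Γ, a, l => {b | ∃ c ∈ γ.atarget a l, b ∈ Trek.atarget Γ c l}

end Trek

/-!
The target set is the intersection of the `l`-ball of `D_N`, a dilate of the compact unit ball,
with a sublevel set of `η ↦ dn(ω, η)`, which is a supremum of continuous functions and hence
lower semicontinuous; so it is compact. For nonemptiness write `ω = l ω'` with `D(ω') ≤ 1`. The
imprint provides an anchor `ω_j` with `mkD(ω_j, ω') < ι(γ) + ε`, and then
`dn(ω, l η_j) ≤ l (mkD(ω_j, ω') + ρ_mod(γ)) ≤ l (ρ(γ) + ε)`. A minimiser of `dn(ω, ·)` on the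
compact `l`-ball therefore satisfies `dn ≤ l ρ(γ)`.
-/

theorem exists_lt_hausDist_add {X : Type*} {d : X → X → ℝ} {S T : Set X} (hS : S.Nonempty)
    (hd : ∀ x ∈ S, ∀ y ∈ T, 0 ≤ d x y) {C : ℝ} (hC : ∀ x ∈ S, ∀ y ∈ T, d x y ≤ C)
    {y : X} (hy : y ∈ T) {ε : ℝ} (hε : 0 < ε) :
    ∃ x ∈ S, d x y < hausDist d S T + ε := by
  obtain ⟨x₀, hx₀⟩ := hS
  have hbdd : BddAbove {r | ∃ y ∈ T, r = sInf {s | ∃ x ∈ S, s = d x y}} := by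
    refine ⟨C, ?_⟩
    rintro r ⟨y', hy', rfl⟩
    have hbelow : BddBelow {s | ∃ x ∈ S, s = d x y'} :=
      ⟨0, by rintro s ⟨x, hx, rfl⟩; exact hd x hx y' hy'⟩
    exact (csInf_le hbelow ⟨x₀, hx₀, rfl⟩).trans (hC x₀ hx₀ y' hy')
  have hinf : sInf {s | ∃ x ∈ S, s = d x y} ≤ hausDist d S T :=
    (le_csSup hbdd ⟨y, hy, rfl⟩).trans (le_max_right _ _)
  obtain ⟨_, ⟨x, hx, rfl⟩, hlt⟩ := exists_lt_of_csInf_lt (s := {s | ∃ x ∈ S, s = d x y})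
    ⟨_, x₀, hx₀, rfl⟩ (hinf.trans_lt (lt_add_of_pos_right _ hε))
  exact ⟨x, hx, hlt⟩

namespace BundledMQVB

variable (Ω : BundledMQVB F G H)

instance instCStarAlgebra : CStarAlgebra Ω.A := {}

theorem norm_inn_le (x y : Ω.M) : ‖Ω.inn x y‖ ≤ ‖x‖ * ‖y‖ := by
  let _ := CStarAlgebra.spectralOrder Ω.A
  let _ := CStarAlgebra.spectralOrderedRing Ω.A
  -- `(x, y) ↦ inn y x` is an inner product in Mathlib's convention (linear in the second slot)
  let _ : CStarModule Ω.A Ω.M :=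
    { inner := fun x y => Ω.inn y x
      inner_add_right := Ω.inn_add_left _ _ _
      inner_self_nonneg := by
        intro x
        obtain ⟨b, hb⟩ := Ω.inn_pos x
        exact hb ▸ star_mul_self_nonneg b
      inner_self := ⟨Ω.inn_definite _, by rintro rfl; simpa using Ω.inn_add_left 0 0 0⟩
      inner_op_smul_right := Ω.inn_smul_left _ _ _
      inner_smul_right_complex := Ω.inn_smul_leftC _ _ _
      star_inner := fun x y => Ω.inn_star y x
      norm_eq_sqrt_norm_inner_self := Ω.norm_eq }
  exact (CStarModule.norm_inner_le Ω.M (A := Ω.A) (x := y) (y := x)).trans_eq (mul_comm _ _)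

theorem inn_smul_right (c : ℂ) (x y : Ω.M) : Ω.inn y (c • x) = star c • Ω.inn y x := by
  rw [← Ω.inn_star, Ω.inn_smul_leftC, star_smul, Ω.inn_star]

theorem norm_smul (c : ℂ) (x : Ω.M) : ‖c • x‖ = ‖c‖ * ‖x‖ := by
  have h : Ω.inn (c • x) (c • x) = ((‖c‖ ^ 2 : ℝ) : ℂ) • Ω.inn x x := by
    rw [Ω.inn_smul_leftC, Ω.inn_smul_right, smul_smul, Complex.star_def, Complex.mul_conj',
      Complex.ofReal_pow]
  rw [Ω.norm_eq, h, _root_.norm_smul, Complex.norm_real, Real.norm_of_nonneg (by positivity),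
    Real.sqrt_mul (by positivity), Real.sqrt_sq (norm_nonneg c), ← Ω.norm_eq]

instance normedSpace : NormedSpace ℂ Ω.M := ⟨fun c x => (Ω.norm_smul c x).le⟩

def innLeftCLM (ξ : Ω.M) : Ω.M →L[ℂ] Ω.A :=
  LinearMap.mkContinuous
    { toFun := fun η => Ω.inn η ξ
      map_add' := fun u v => Ω.inn_add_left u v ξ
      map_smul' := fun c u => Ω.inn_smul_leftC c u ξ }
    ‖ξ‖ fun η => (Ω.norm_inn_le η ξ).trans_eq (mul_comm _ _)

theorem continuous_inn_left (ξ : Ω.M) : Continuous fun η => Ω.inn η ξ :=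
  (Ω.innLeftCLM ξ).continuous

theorem continuous_inn_right (ξ : Ω.M) : Continuous fun η => Ω.inn ξ η := by
  simpa only [Ω.inn_star] using (Ω.continuous_inn_left ξ).star

theorem zero_mem_Ddom : (0 : Ω.M) ∈ Ω.Ddom := by
  obtain ⟨x, hx⟩ := Ω.Ddom_dense.nonempty
  simpa using Ω.Ddom_smul 0 x hx

theorem D_zero : Ω.D 0 = 0 := by
  obtain ⟨x, hx⟩ := Ω.Ddom_dense.nonempty
  simpa using Ω.D_smul 0 x hx

theorem zero_mem_Dball_one : (0 : Ω.M) ∈ Ω.Dball 1 :=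
  ⟨Ω.zero_mem_Ddom, Ω.D_zero.trans_le zero_le_one⟩

theorem norm_le_of_mem_Dball {ξ : Ω.M} {r : ℝ} (hξ : ξ ∈ Ω.Dball r) : ‖ξ‖ ≤ r :=
  (Ω.norm_le_D ξ hξ.1).trans hξ.2

theorem ofReal_smul_mem_Dball {ξ : Ω.M} {r t : ℝ} (ht : 0 ≤ t) (hξ : ξ ∈ Ω.Dball r) :
    (t : ℂ) • ξ ∈ Ω.Dball (t * r) := by
  refine ⟨Ω.Ddom_smul _ ξ hξ.1, ?_⟩
  rw [Ω.D_smul _ ξ hξ.1, Complex.norm_real, Real.norm_of_nonneg ht]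
  exact mul_le_mul_of_nonneg_left hξ.2 ht

theorem Dball_eq_image_smul {l : ℝ} (hl : 0 ≤ l) :
    Ω.Dball l = (fun ξ => (l : ℂ) • ξ) '' Ω.Dball 1 := by
  refine subset_antisymm (fun η hη => ?_) ?_
  · rcases hl.eq_or_lt with rfl | hl
    · have hη0 : η = 0 := norm_le_zero_iff.mp (Ω.norm_le_of_mem_Dball hη)
      exact ⟨0, Ω.zero_mem_Dball_one, by simp [hη0]⟩
    · refine ⟨((l⁻¹ : ℝ) : ℂ) • η, ?_, ?_⟩
      · simpa [inv_mul_cancel₀ hl.ne'] using Ω.ofReal_smul_mem_Dball (inv_nonneg.mpr hl.le) hη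
      · simp [smul_smul, mul_inv_cancel₀ (Complex.ofReal_ne_zero.mpr hl.ne')]
  · rintro _ ⟨ξ, hξ, rfl⟩
    simpa using Ω.ofReal_smul_mem_Dball hl hξ

theorem isCompact_Dball {l : ℝ} (hl : 0 ≤ l) : IsCompact (Ω.Dball l) := by
  rw [Ω.Dball_eq_image_smul hl]
  exact Ω.D_ball_compact.image (continuous_const_smul _)

theorem exists_smul_eq_of_D_le {ω : Ω.M} (hω : ω ∈ Ω.Ddom) {l : ℝ} (hl : Ω.D ω ≤ l) :
    ∃ ω' ∈ Ω.Dball 1, (l : ℂ) • ω' = ω := by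
  rw [← Set.mem_image, ← Ω.Dball_eq_image_smul ((Ω.D_nonneg ω).trans hl)]
  exact ⟨hω, hl⟩

theorem norm_inn_le_of_mem_Dball_one_right (x : Ω.M) {ξ : Ω.M} (hξ : ξ ∈ Ω.Dball 1) :
    ‖Ω.inn x ξ‖ ≤ ‖x‖ :=
  (Ω.norm_inn_le x ξ).trans (mul_le_of_le_one_right (norm_nonneg x) (Ω.norm_le_of_mem_Dball hξ))

theorem norm_inn_le_of_mem_Dball_one_left (x : Ω.M) {ξ : Ω.M} (hξ : ξ ∈ Ω.Dball 1) :
    ‖Ω.inn ξ x‖ ≤ ‖x‖ := by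
  rw [← Ω.inn_star, norm_star]
  exact Ω.norm_inn_le_of_mem_Dball_one_right x hξ

theorem norm_inn_sub_le (x y : Ω.M) {ξ : Ω.M} (hξ : ξ ∈ Ω.Dball 1) :
    ‖Ω.inn x ξ - Ω.inn y ξ‖ ≤ ‖x‖ + ‖y‖ :=
  (norm_sub_le _ _).trans (add_le_add (Ω.norm_inn_le_of_mem_Dball_one_right x hξ)
    (Ω.norm_inn_le_of_mem_Dball_one_right y hξ))

theorem mkD_le (x y : Ω.M) : Ω.mkD x y ≤ ‖x‖ + ‖y‖ :=
  csSup_le ⟨_, 0, Ω.zero_mem_Ddom, Ω.zero_mem_Dball_one.2, rfl⟩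
    (by rintro _ ⟨ξ, hξ, hD, rfl⟩; exact Ω.norm_inn_sub_le x y ⟨hξ, hD⟩)

theorem norm_inn_sub_le_mkD (x y : Ω.M) {ξ : Ω.M} (hξ : ξ ∈ Ω.Dball 1) :
    ‖Ω.inn x ξ - Ω.inn y ξ‖ ≤ Ω.mkD x y :=
  le_csSup ⟨‖x‖ + ‖y‖, by rintro _ ⟨ξ, hξ, hD, rfl⟩; exact Ω.norm_inn_sub_le x y ⟨hξ, hD⟩⟩
    ⟨ξ, hξ.1, hξ.2, rfl⟩

theorem mkD_nonneg (x y : Ω.M) : 0 ≤ Ω.mkD x y :=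
  (norm_nonneg _).trans (Ω.norm_inn_sub_le_mkD x y Ω.zero_mem_Dball_one)

end BundledMQVB

namespace ModularBridge

variable {ΩA ΩB : BundledMQVB F G H} (γ : ModularBridge ΩA ΩB)

instance instCStarAlgebra : CStarAlgebra γ.Dalg := {}

theorem norm_piA_mul_pivot_le (a : ΩA.A) : ‖γ.piA a * γ.pivot‖ ≤ ‖a‖ := by
  simpa [γ.pivot_norm, NonUnitalStarAlgHom.norm_map γ.piA γ.piA_inj] using
    norm_mul_le (γ.piA a) γ.pivot

theorem norm_pivot_mul_piB_le (b : ΩB.A) : ‖γ.pivot * γ.piB b‖ ≤ ‖b‖ := by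
  simpa [γ.pivot_norm, NonUnitalStarAlgHom.norm_map γ.piB γ.piB_inj] using
    norm_mul_le γ.pivot (γ.piB b)

theorem bn_le (a : ΩA.A) (b : ΩB.A) : γ.bn a b ≤ ‖a‖ + ‖b‖ :=
  (norm_sub_le _ _).trans (add_le_add (γ.norm_piA_mul_pivot_le a) (γ.norm_pivot_mul_piB_le b))

theorem bn_le_norm_sub_add (a a' : ΩA.A) (b : ΩB.A) : γ.bn a b ≤ ‖a - a'‖ + γ.bn a' b := by
  have h : γ.piA a * γ.pivot - γ.pivot * γ.piB b
      = γ.piA (a - a') * γ.pivot + (γ.piA a' * γ.pivot - γ.pivot * γ.piB b) := by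
    rw [map_sub, sub_mul]; abel
  unfold bn
  rw [h]
  exact (norm_add_le _ _).trans (add_le_add_left (γ.norm_piA_mul_pivot_le _) _)

theorem bn_ofReal_smul {t : ℝ} (ht : 0 ≤ t) (a : ΩA.A) (b : ΩB.A) :
    γ.bn ((t : ℂ) • a) ((t : ℂ) • b) = t * γ.bn a b := by
  rw [bn, bn, map_smul, map_smul, smul_mul_assoc, mul_smul_comm, ← smul_sub, norm_smul,
    Complex.norm_real, Real.norm_of_nonneg ht]

theorem continuous_bn (a : ΩA.A) {X : Type*} [TopologicalSpace X] {f : X → ΩB.A}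
    (hf : Continuous f) : Continuous fun x => γ.bn a (f x) :=
  (continuous_const.sub (continuous_const.mul
    ((NonUnitalStarAlgHom.isometry γ.piB γ.piB_inj).continuous.comp hf))).norm

def deckTerm (ω : ΩA.M) (η : ΩB.M) (k : γ.J) : ℝ :=
  max (γ.bn (ΩA.inn ω (γ.anchors k)) (ΩB.inn η (γ.coanchors k)))
    (γ.bn (ΩA.inn (γ.anchors k) ω) (ΩB.inn (γ.coanchors k) η))

theorem dn_eq_iSup_deckTerm (ω : ΩA.M) (η : ΩB.M) : γ.dn ω η = ⨆ k, γ.deckTerm ω η k := rfl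

theorem anchors_mem_Dball (j : γ.J) : γ.anchors j ∈ ΩA.Dball 1 :=
  ⟨γ.anchors_mem j, γ.anchors_le j⟩

theorem coanchors_mem_Dball (j : γ.J) : γ.coanchors j ∈ ΩB.Dball 1 :=
  ⟨γ.coanchors_mem j, γ.coanchors_le j⟩

theorem deckTerm_le (ω : ΩA.M) (η : ΩB.M) (k : γ.J) : γ.deckTerm ω η k ≤ ‖ω‖ + ‖η‖ :=
  max_le
    ((γ.bn_le _ _).trans (add_le_add
      (ΩA.norm_inn_le_of_mem_Dball_one_right ω (γ.anchors_mem_Dball k))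
      (ΩB.norm_inn_le_of_mem_Dball_one_right η (γ.coanchors_mem_Dball k))))
    ((γ.bn_le _ _).trans (add_le_add
      (ΩA.norm_inn_le_of_mem_Dball_one_left ω (γ.anchors_mem_Dball k))
      (ΩB.norm_inn_le_of_mem_Dball_one_left η (γ.coanchors_mem_Dball k))))

theorem bddAbove_range_deckTerm (ω : ΩA.M) (η : ΩB.M) :
    BddAbove (Set.range (γ.deckTerm ω η)) :=
  ⟨‖ω‖ + ‖η‖, by rintro _ ⟨k, rfl⟩; exact γ.deckTerm_le ω η k⟩

theorem deckTerm_le_dn (ω : ΩA.M) (η : ΩB.M) (k : γ.J) : γ.deckTerm ω η k ≤ γ.dn ω η :=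
  le_ciSup (γ.bddAbove_range_deckTerm ω η) k

theorem lowerSemicontinuous_dn (ω : ΩA.M) : LowerSemicontinuous (γ.dn ω) :=
  lowerSemicontinuous_ciSup (γ.bddAbove_range_deckTerm ω) fun _ =>
    ((γ.continuous_bn _ (ΩB.continuous_inn_left _)).max
      (γ.continuous_bn _ (ΩB.continuous_inn_right _))).lowerSemicontinuous

theorem dn_ofReal_smul {t : ℝ} (ht : 0 ≤ t) (ω : ΩA.M) (η : ΩB.M) :
    γ.dn ((t : ℂ) • ω) ((t : ℂ) • η) = t * γ.dn ω η := by
  have hterm : ∀ k, γ.deckTerm ((t : ℂ) • ω) ((t : ℂ) • η) k = t * γ.deckTerm ω η k := by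
    intro k
    simp only [deckTerm, ΩA.inn_smul_leftC, ΩB.inn_smul_leftC, ΩA.inn_smul_right,
      ΩB.inn_smul_right, Complex.star_def, Complex.conj_ofReal, γ.bn_ofReal_smul ht,
      mul_max_of_nonneg _ _ ht]
  simp only [dn_eq_iSup_deckTerm, hterm, Real.mul_iSup_of_nonneg ht]

theorem dn_anchors_le_modularReach (j : γ.J) :
    γ.dn (γ.anchors j) (γ.coanchors j) ≤ γ.modularReach := by
  refine le_ciSup (f := fun i => γ.dn (γ.anchors i) (γ.coanchors i)) ⟨1 + 1, ?_⟩ j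
  rintro _ ⟨i, rfl⟩
  exact (ciSup_le (γ.deckTerm_le _ _)).trans (add_le_add
    (ΩA.norm_le_of_mem_Dball (γ.anchors_mem_Dball i))
    (ΩB.norm_le_of_mem_Dball (γ.coanchors_mem_Dball i)))

/-- Replacing `ω` by the anchor `ω_j` moves each term of `dn` by at most `mkD(ω_j, ω)`. -/
theorem dn_coanchors_le (ω : ΩA.M) (j : γ.J) :
    γ.dn ω (γ.coanchors j) ≤ ΩA.mkD (γ.anchors j) ω + γ.modularReach := by
  refine ciSup_le fun k => max_le ?_ ?_
  · refine (γ.bn_le_norm_sub_add _ (ΩA.inn (γ.anchors j) (γ.anchors k)) _).trans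
      (add_le_add ?_ ?_)
    · rw [norm_sub_rev]
      exact ΩA.norm_inn_sub_le_mkD _ _ (γ.anchors_mem_Dball k)
    · exact (le_max_left _ _).trans
        ((γ.deckTerm_le_dn _ _ k).trans (γ.dn_anchors_le_modularReach j))
  · refine (γ.bn_le_norm_sub_add _ (ΩA.inn (γ.anchors k) (γ.anchors j)) _).trans
      (add_le_add ?_ ?_)
    · rw [← ΩA.inn_star, ← ΩA.inn_star (γ.anchors j), ← star_sub, norm_star, norm_sub_rev]
      exact ΩA.norm_inn_sub_le_mkD _ _ (γ.anchors_mem_Dball k)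
    · exact (le_max_right _ _).trans
        ((γ.deckTerm_le_dn _ _ k).trans (γ.dn_anchors_le_modularReach j))

theorem exists_mkD_anchors_lt {ω : ΩA.M} (hω : ω ∈ ΩA.Dball 1) {ε : ℝ} (hε : 0 < ε) :
    ∃ j, ΩA.mkD (γ.anchors j) ω < γ.imprint + ε := by
  obtain ⟨_, ⟨j, rfl⟩, hj⟩ := exists_lt_hausDist_add (Set.range_nonempty γ.anchors)
    (by rintro _ ⟨i, rfl⟩ y -; exact ΩA.mkD_nonneg _ y)
    (by rintro _ ⟨i, rfl⟩ y hy; exact (ΩA.mkD_le _ y).trans (add_le_add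
      (ΩA.norm_le_of_mem_Dball (γ.anchors_mem_Dball i)) (ΩA.norm_le_of_mem_Dball hy)))
    hω hε
  exact ⟨j, hj.trans_le (add_le_add_left (le_max_left _ _) ε)⟩

theorem exists_mem_Dball_dn_le {ω : ΩA.M} (hω : ω ∈ ΩA.Ddom) {l : ℝ} (hl : ΩA.D ω ≤ l)
    {ε : ℝ} (hε : 0 < ε) : ∃ η ∈ ΩB.Dball l, γ.dn ω η ≤ l * (γ.reach + ε) := by
  have hl0 : 0 ≤ l := (ΩA.D_nonneg ω).trans hl
  obtain ⟨ω', hω', rfl⟩ := ΩA.exists_smul_eq_of_D_le hω hl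
  obtain ⟨j, hj⟩ := γ.exists_mkD_anchors_lt hω' hε
  refine ⟨(l : ℂ) • γ.coanchors j, by
    simpa using ΩB.ofReal_smul_mem_Dball hl0 (γ.coanchors_mem_Dball j), ?_⟩
  rw [γ.dn_ofReal_smul hl0]
  refine mul_le_mul_of_nonneg_left ((γ.dn_coanchors_le ω' j).trans ?_) hl0
  have : γ.modularReach + γ.imprint ≤ γ.reach := le_max_right _ _
  linarith

theorem mtarget_eq (ω : ΩA.M) (l : ℝ) :
    γ.mtarget ω l = ΩB.Dball l ∩ {η | γ.dn ω η ≤ l * γ.reach} :=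
  Set.ext fun _ => and_assoc.symm

end ModularBridge

theorem statement6_general {F : ℝ → ℝ → ℝ → ℝ → ℝ} {G : ℝ → ℝ → ℝ → ℝ} {H : ℝ → ℝ → ℝ}
    {ΩA ΩB : BundledMQVB F G H} (γ : ModularBridge ΩA ΩB)
    (ω : ΩA.M) (hω : ω ∈ ΩA.Ddom) (l : ℝ) (hl : ΩA.D ω ≤ l) :
    (γ.mtarget ω l).Nonempty ∧ IsCompact (γ.mtarget ω l) := by
  have hK : IsCompact (ΩB.Dball l) := ΩB.isCompact_Dball ((ΩA.D_nonneg ω).trans hl)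
  have hdn := γ.lowerSemicontinuous_dn ω
  rw [γ.mtarget_eq]
  refine ⟨?_, hK.inter_right (hdn.isClosed_preimage _)⟩
  obtain ⟨η₁, hη₁, -⟩ := γ.exists_mem_Dball_dn_le hω hl one_pos
  obtain ⟨η₀, hη₀, hmin⟩ := (hdn.lowerSemicontinuousOn _).exists_isMinOn ⟨η₁, hη₁⟩ hK
  have happrox : ∀ ε > 0, γ.dn ω η₀ ≤ l * (γ.reach + ε) := by
    intro ε hε
    obtain ⟨η, hη, hdnη⟩ := γ.exists_mem_Dball_dn_le hω hl hε
    exact (hmin hη).trans hdnη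
  have hlim : Filter.Tendsto (fun ε => l * (γ.reach + ε)) (nhdsWithin 0 (Set.Ioi 0))
      (nhds (l * γ.reach)) :=
    ((continuous_const.mul (continuous_const.add continuous_id)).tendsto' 0 _
      (by simp)).mono_left nhdsWithin_le_nhds
  exact ⟨η₀, hη₀, ge_of_tendsto hlim (eventually_nhdsWithin_of_forall happrox)⟩

/-- for any `ω ∈ dom(D_M)` and `l ≥ D_M(ω)`, the `l`-modular target set
`t_γ(ω|l)` is nonempty and compact for the C*-Hilbert norm of `N`. -/
theorem statement6 {F : ℝ → ℝ → ℝ → ℝ → ℝ} {G : ℝ → ℝ → ℝ → ℝ} {H : ℝ → ℝ → ℝ}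
    (hFGH : AdmissibleTriple F G H)
    {ΩA ΩB : BundledMQVB F G H} (γ : ModularBridge ΩA ΩB)
    (ω : ΩA.M) (hω : ω ∈ ΩA.Ddom) (l : ℝ) (hl : ΩA.D ω ≤ l) :
    (γ.mtarget ω l).Nonempty ∧ IsCompact (γ.mtarget ω l) :=
  statement6_general γ ω hω l hl
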